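/- Let G be a finite group, φ : G → ℤ/2 a surjective group homomorphism with kernel G₀, a ∈ G ∖ G₀, and ρ : G₀ → GL(n, ℂ) an irreducible group homomorphism, with conjugate representation ρ*(g) = σ(ρ(a⁻¹ g a)). If there exists some isomorphism S ∈ GL(n, ℂ) from ρ* to ρ (i.e., S · ρ*(g) = ρ(g) · S for all g ∈ G₀), then there exists an isomorphism T ∈ GL(n, ℂ) from ρ* to ρ such that either T · σ(T) = ρ(a²) or T · σ(T) = −ρ(a²). -/

import Mathlib

open Matrix

noncomputable section

/-- Entrywise complex conjugation of a complex matrix. -/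
def conjMat {m n : ℕ} (M : Matrix (Fin m) (Fin n) ℂ) : Matrix (Fin m) (Fin n) ℂ :=
  M.map (starRingEnd ℂ)

/-- Entrywise complex conjugation of a vector in `ℂⁿ`. -/
def conjVec {n : ℕ} (v : Fin n → ℂ) : Fin n → ℂ :=
  fun i => starRingEnd ℂ (v i)

/-- `σ^ε` on matrices, for `ε : ℤ/2` (written multiplicatively). -/
def sigmaPow {m n : ℕ} (ε : Multiplicative (ZMod 2)) (M : Matrix (Fin m) (Fin n) ℂ) :
    Matrix (Fin m) (Fin n) ℂ :=
  if ε = 1 then M else conjMat M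

/-- `σ^ε` on vectors. -/
def sigmaPowVec {n : ℕ} (ε : Multiplicative (ZMod 2)) (v : Fin n → ℂ) : Fin n → ℂ :=
  if ε = 1 then v else conjVec v

/-- A magnetic representation of the magnetic group `(G, φ)` on `ℂⁿ`:
`ρ (g * h) = ρ g * σ^(φ g) (ρ h)`. -/
def IsMagneticRep {G : Type*} [Group G] (φ : G →* Multiplicative (ZMod 2)) {n : ℕ}
    (ρ : G → Matrix.GeneralLinearGroup (Fin n) ℂ) : Prop :=
  ∀ g h : G, (ρ (g * h) : Matrix (Fin n) (Fin n) ℂ) =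
    (ρ g : Matrix (Fin n) (Fin n) ℂ) * sigmaPow (φ g) (ρ h : Matrix (Fin n) (Fin n) ℂ)

/-- A morphism of magnetic representations from `ρ₁` to `ρ₂`. -/
def IsMagMorphism {G : Type*} [Group G] (φ : G →* Multiplicative (ZMod 2)) {n m : ℕ}
    (ρ₁ : G → Matrix.GeneralLinearGroup (Fin n) ℂ)
    (ρ₂ : G → Matrix.GeneralLinearGroup (Fin m) ℂ)
    (T : Matrix (Fin m) (Fin n) ℂ) : Prop :=
  ∀ g : G, T * (ρ₁ g : Matrix (Fin n) (Fin n) ℂ) =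
    (ρ₂ g : Matrix (Fin m) (Fin m) ℂ) * sigmaPow (φ g) T

/-- A `ℂ`-subspace invariant under a magnetic representation. -/
def MagInvariant {G : Type*} [Group G] (φ : G →* Multiplicative (ZMod 2)) {n : ℕ}
    (ρ : G → Matrix.GeneralLinearGroup (Fin n) ℂ) (W : Submodule ℂ (Fin n → ℂ)) : Prop :=
  ∀ g : G, ∀ w ∈ W, (ρ g : Matrix (Fin n) (Fin n) ℂ).mulVec (sigmaPowVec (φ g) w) ∈ W

/-- An irreducible magnetic representation. -/
def IsIrredMagRep {G : Type*} [Group G] (φ : G →* Multiplicative (ZMod 2)) {n : ℕ}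
    (ρ : G → Matrix.GeneralLinearGroup (Fin n) ℂ) : Prop :=
  (⊥ : Submodule ℂ (Fin n → ℂ)) ≠ ⊤ ∧
    ∀ W : Submodule ℂ (Fin n → ℂ), MagInvariant φ ρ W → W = ⊥ ∨ W = ⊤

/-- Irreducibility of a classical (complex linear) representation given by
a family of invertible matrices. -/
def IsClassIrreducible {H : Type*} {n : ℕ}
    (ρ : H → Matrix.GeneralLinearGroup (Fin n) ℂ) : Prop :=
  (⊥ : Submodule ℂ (Fin n → ℂ)) ≠ ⊤ ∧
    ∀ W : Submodule ℂ (Fin n → ℂ),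
      (∀ h : H, ∀ w ∈ W, (ρ h : Matrix (Fin n) (Fin n) ℂ).mulVec w ∈ W) → W = ⊥ ∨ W = ⊤

theorem sq_mem {G : Type*} [Group G] (φ : G →* Multiplicative (ZMod 2)) (a : G) :
    a * a ∈ φ.ker := by
  have h2 : ∀ x : Multiplicative (ZMod 2), x * x = 1 := by decide
  simp [MonoidHom.mem_ker, _root_.map_mul, h2]

/-- `g ↦ a⁻¹ g a` as a map `G₀ → G₀` for `G₀ = ker φ`. -/
def kerConj {G : Type*} [Group G] (φ : G →* Multiplicative (ZMod 2)) (a : G) (g : φ.ker) :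
    φ.ker :=
  ⟨a⁻¹ * g * a, by
    have hg : φ g = 1 := g.2
    simp [MonoidHom.mem_ker, _root_.map_mul, map_inv, hg]⟩

/-- Entrywise conjugation as a map `GL(n, ℂ) → GL(n, ℂ)`. -/
def conjGL {n : ℕ} (A : Matrix.GeneralLinearGroup (Fin n) ℂ) :
    Matrix.GeneralLinearGroup (Fin n) ℂ :=
  Units.map (RingHom.toMonoidHom (RingHom.mapMatrix (starRingEnd ℂ))) A

theorem conjGL_conjGL {n : ℕ} (A : Matrix.GeneralLinearGroup (Fin n) ℂ) :
    conjGL (conjGL A) = A := by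
  apply Units.ext
  ext i j
  simp [conjGL]

theorem conjMat_mul {l m n : ℕ} (M : Matrix (Fin l) (Fin m) ℂ) (N : Matrix (Fin m) (Fin n) ℂ) :
    conjMat (M * N) = conjMat M * conjMat N := by
  ext i j
  simp [conjMat, Matrix.mul_apply, map_sum]

theorem conjMat_add {m n : ℕ} (M N : Matrix (Fin m) (Fin n) ℂ) :
    conjMat (M + N) = conjMat M + conjMat N := by
  ext i j
  simp [conjMat]

theorem sigmaPow_mul {l m n : ℕ} (ε : Multiplicative (ZMod 2))
    (M : Matrix (Fin l) (Fin m) ℂ) (N : Matrix (Fin m) (Fin n) ℂ) :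
    sigmaPow ε (M * N) = sigmaPow ε M * sigmaPow ε N := by
  unfold sigmaPow
  split
  · rfl
  · exact conjMat_mul M N

theorem sigmaPow_add {m n : ℕ} (ε : Multiplicative (ZMod 2))
    (M N : Matrix (Fin m) (Fin n) ℂ) :
    sigmaPow ε (M + N) = sigmaPow ε M + sigmaPow ε N := by
  unfold sigmaPow
  split
  · rfl
  · exact conjMat_add M N

/-- The `ℝ`-algebra of endomorphisms of a magnetic representation. -/
def MagEnd {G : Type*} [Group G] (φ : G →* Multiplicative (ZMod 2)) {n : ℕ}
    (ρ : G → Matrix.GeneralLinearGroup (Fin n) ℂ) :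
    Subalgebra ℝ (Matrix (Fin n) (Fin n) ℂ) where
  carrier := {T | ∀ g : G, T * (ρ g : Matrix (Fin n) (Fin n) ℂ) =
      (ρ g : Matrix (Fin n) (Fin n) ℂ) * sigmaPow (φ g) T}
  mul_mem' := by
    intro T S hT hS g
    rw [mul_assoc, hS g, ← mul_assoc, hT g, mul_assoc, sigmaPow_mul]
  add_mem' := by
    intro T S hT hS g
    rw [add_mul, hT g, hS g, sigmaPow_add, mul_add]
  algebraMap_mem' := by
    intro r g
    have hσ : sigmaPow (φ g) (algebraMap ℝ (Matrix (Fin n) (Fin n) ℂ) r) =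
        algebraMap ℝ (Matrix (Fin n) (Fin n) ℂ) r := by
      unfold sigmaPow conjMat
      split
      · rfl
      · ext i j
        simp [Matrix.algebraMap_matrix_apply, apply_ite (starRingEnd ℂ)]
    rw [hσ, Algebra.commutes]

/-- `(n+n) × (n+n)` block matrix built out of four `n × n` blocks. -/
def blocks {n : ℕ} (A B C D : Matrix (Fin n) (Fin n) ℂ) :
    Matrix (Fin (n + n)) (Fin (n + n)) ℂ :=
  Matrix.reindex finSumFinEquiv finSumFinEquiv (Matrix.fromBlocks A B C D)

/-- The matrix of the inclusion `ℂⁿ → ℂ^{n+n}` of the first block. -/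
def iotaMat (n : ℕ) : Matrix (Fin (n + n)) (Fin n) ℂ :=
  Matrix.reindex finSumFinEquiv (Equiv.refl (Fin n))
    (Matrix.fromRows (1 : Matrix (Fin n) (Fin n) ℂ) (0 : Matrix (Fin n) (Fin n) ℂ))


theorem conjMat_conjMat' {m n : ℕ} (M : Matrix (Fin m) (Fin n) ℂ) :
    conjMat (conjMat M) = M := by
  ext i j
  simp [conjMat]

theorem conjMat_smul' {m n : ℕ} (z : ℂ) (M : Matrix (Fin m) (Fin n) ℂ) :
    conjMat (z • M) = (starRingEnd ℂ z) • conjMat M := by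
  ext i j
  simp [conjMat]

theorem conjGL_coe {n : ℕ} (A : Matrix.GeneralLinearGroup (Fin n) ℂ) :
    (conjGL A : Matrix (Fin n) (Fin n) ℂ) = conjMat (A : Matrix (Fin n) (Fin n) ℂ) := rfl

theorem schur' {H : Type*} {n : ℕ} (ρ : H → Matrix.GeneralLinearGroup (Fin n) ℂ)
    (hirr : IsClassIrreducible ρ) (M : Matrix (Fin n) (Fin n) ℂ)
    (hM : ∀ g : H, M * (ρ g : Matrix (Fin n) (Fin n) ℂ) =
      (ρ g : Matrix (Fin n) (Fin n) ℂ) * M) :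
    ∃ c : ℂ, M = c • (1 : Matrix (Fin n) (Fin n) ℂ) := by
  have hnt : Nontrivial (Fin n → ℂ) := by
    by_contra h
    rw [not_nontrivial_iff_subsingleton] at h
    exact hirr.1 (Subsingleton.elim _ _)
  obtain ⟨c, hc⟩ := Module.End.exists_eigenvalue (M.mulVecLin)
  refine ⟨c, ?_⟩
  set W := Module.End.eigenspace M.mulVecLin c with hWdef
  have hW : ∀ h : H, ∀ w ∈ W, (ρ h : Matrix (Fin n) (Fin n) ℂ).mulVec w ∈ W := by
    intro h w hw
    rw [hWdef, Module.End.mem_eigenspace_iff] at hw ⊢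
    simp only [Matrix.mulVecLin_apply] at hw ⊢
    rw [Matrix.mulVec_mulVec, hM, ← Matrix.mulVec_mulVec, hw, Matrix.mulVec_smul]
  rcases hirr.2 W hW with hbot | htop
  · exact absurd hbot hc
  · have hall : ∀ v : Fin n → ℂ, M.mulVec v = c • v := by
      intro v
      have hv : v ∈ W := htop ▸ Submodule.mem_top
      rw [hWdef, Module.End.mem_eigenspace_iff] at hv
      simpa using hv
    ext i j
    have := congrFun (hall (Pi.single j 1)) i
    simp only [Matrix.mulVec_single, Pi.smul_apply, Matrix.smul_apply] at this ⊢
    by_cases hij : i = j <;>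
      simp_all [Matrix.one_apply, Pi.single_apply, eq_comm]

theorem stmt10 {G : Type*} [Group G] [Finite G]
    (φ : G →* Multiplicative (ZMod 2)) (hφ : Function.Surjective φ)
    (a : G) (ha : a ∉ φ.ker) {n : ℕ}
    (ρ : φ.ker →* Matrix.GeneralLinearGroup (Fin n) ℂ)
    (hirr : IsClassIrreducible fun g : φ.ker => ρ g)
    (S : Matrix.GeneralLinearGroup (Fin n) ℂ)
    (hS : ∀ g : φ.ker,
      (S : Matrix (Fin n) (Fin n) ℂ) * conjMat (ρ (kerConj φ a g) : Matrix (Fin n) (Fin n) ℂ) =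
        (ρ g : Matrix (Fin n) (Fin n) ℂ) * (S : Matrix (Fin n) (Fin n) ℂ)) :
    ∃ T : Matrix.GeneralLinearGroup (Fin n) ℂ,
      (∀ g : φ.ker,
        (T : Matrix (Fin n) (Fin n) ℂ) * conjMat (ρ (kerConj φ a g) : Matrix (Fin n) (Fin n) ℂ) =
          (ρ g : Matrix (Fin n) (Fin n) ℂ) * (T : Matrix (Fin n) (Fin n) ℂ)) ∧
      ((T : Matrix (Fin n) (Fin n) ℂ) * conjMat (T : Matrix (Fin n) (Fin n) ℂ) =
          (ρ ⟨a * a, sq_mem φ a⟩ : Matrix (Fin n) (Fin n) ℂ) ∨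
        (T : Matrix (Fin n) (Fin n) ℂ) * conjMat (T : Matrix (Fin n) (Fin n) ℂ) =
          -(ρ ⟨a * a, sq_mem φ a⟩ : Matrix (Fin n) (Fin n) ℂ)) := by
  classical
  have hnt : Nontrivial (Fin n → ℂ) := by
    by_contra h
    rw [not_nontrivial_iff_subsingleton] at h
    exact hirr.1 (Subsingleton.elim _ _)
  have hn : n ≠ 0 := by
    rintro rfl
    exact not_nontrivial _ hnt
  haveI : NeZero n := ⟨hn⟩
  haveI : Nontrivial (Matrix (Fin n) (Fin n) ℂ) := by infer_instance
  set asq : φ.ker := ⟨a * a, sq_mem φ a⟩ with hasq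
  set Sm : Matrix (Fin n) (Fin n) ℂ := (S : Matrix (Fin n) (Fin n) ℂ) with hSmdef
  set A2 := ρ asq with hA2def
  set A2m : Matrix (Fin n) (Fin n) ℂ := (A2 : Matrix (Fin n) (Fin n) ℂ) with hA2mdef
  -- Basic kerConj identities
  have hkk : ∀ g : φ.ker, kerConj φ a (kerConj φ a⁻¹ g) = g := by
    intro g
    apply Subtype.ext
    show a⁻¹ * (a⁻¹⁻¹ * ↑g * a⁻¹) * a = ↑g
    group
  have hkk2 : ∀ g : φ.ker, kerConj φ a⁻¹ (kerConj φ a⁻¹ g) = asq * g * asq⁻¹ := by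
    intro g
    apply Subtype.ext
    show a⁻¹⁻¹ * (a⁻¹⁻¹ * ↑g * a⁻¹) * a⁻¹ = (a * a) * ↑g * (a * a)⁻¹
    group
  have hksq : kerConj φ a asq = asq := by
    apply Subtype.ext
    show a⁻¹ * (a * a) * a = a * a
    group
  -- conjugated intertwining relation
  have hS' : ∀ g : φ.ker,
      conjMat Sm * (ρ g : Matrix (Fin n) (Fin n) ℂ) =
        conjMat (ρ (kerConj φ a⁻¹ g) : Matrix (Fin n) (Fin n) ℂ) * conjMat Sm := by
    intro g
    have h := congrArg conjMat (hS (kerConj φ a⁻¹ g))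
    rw [conjMat_mul, conjMat_mul, hkk g, conjMat_conjMat'] at h
    exact h
  -- S * conjMat (ρ (kerConj a⁻¹ g)) = ρ (a² g a⁻²) * S
  have hS2 : ∀ g : φ.ker,
      Sm * conjMat (ρ (kerConj φ a⁻¹ g) : Matrix (Fin n) (Fin n) ℂ) =
        (ρ (asq * g * asq⁻¹) : Matrix (Fin n) (Fin n) ℂ) * Sm := by
    intro g
    have h := hS (kerConj φ a⁻¹ (kerConj φ a⁻¹ g))
    rw [hkk, hkk2] at h
    exact h
  -- the commuting endomorphism
  set Mm : Matrix (Fin n) (Fin n) ℂ :=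
    ((A2⁻¹ : Matrix.GeneralLinearGroup (Fin n) ℂ) : Matrix (Fin n) (Fin n) ℂ) *
      (Sm * conjMat Sm) with hMmdef
  have hMcomm : ∀ g : φ.ker,
      Mm * (ρ g : Matrix (Fin n) (Fin n) ℂ) = (ρ g : Matrix (Fin n) (Fin n) ℂ) * Mm := by
    intro g
    have e2 : (ρ (asq * g * asq⁻¹) : Matrix (Fin n) (Fin n) ℂ) =
        A2m * (ρ g : Matrix (Fin n) (Fin n) ℂ) *
          ((A2⁻¹ : Matrix.GeneralLinearGroup (Fin n) ℂ) : Matrix (Fin n) (Fin n) ℂ) := by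
      rw [_root_.map_mul, _root_.map_mul, map_inv, Units.val_mul, Units.val_mul]
    have h1 : (Sm * conjMat Sm) * (ρ g : Matrix (Fin n) (Fin n) ℂ) =
        A2m * ((ρ g : Matrix (Fin n) (Fin n) ℂ) *
          (((A2⁻¹ : Matrix.GeneralLinearGroup (Fin n) ℂ) :
            Matrix (Fin n) (Fin n) ℂ) * (Sm * conjMat Sm))) := by
      rw [mul_assoc, hS' g, ← mul_assoc, hS2 g, e2]
      simp only [mul_assoc]
    rw [hMmdef, mul_assoc, h1, ← mul_assoc, ← mul_assoc]
    have : ((A2⁻¹ : Matrix.GeneralLinearGroup (Fin n) ℂ) : Matrix (Fin n) (Fin n) ℂ) * A2m = 1 := by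
      rw [hA2mdef]
      exact A2.inv_mul
    rw [this, one_mul]
  obtain ⟨c, hc⟩ := schur' (fun g : φ.ker => ρ g) hirr Mm hMcomm
  -- key identity: S σ(S) = c • ρ(a²)
  have key : Sm * conjMat Sm = c • A2m := by
    have h1 : A2m * Mm = Sm * conjMat Sm := by
      rw [hMmdef, ← mul_assoc]
      have : A2m * ((A2⁻¹ : Matrix.GeneralLinearGroup (Fin n) ℂ) : Matrix (Fin n) (Fin n) ℂ) = 1 := by
        rw [hA2mdef]; exact A2.mul_inv
      rw [this, one_mul]
    rw [← h1, hc]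
    rw [mul_smul_comm, mul_one]
  -- c ≠ 0
  have hunit : Sm * conjMat Sm = ((S * conjGL S : Matrix.GeneralLinearGroup (Fin n) ℂ) :
      Matrix (Fin n) (Fin n) ℂ) := by
    rw [Units.val_mul, conjGL_coe]
  have hc0 : c ≠ 0 := by
    intro h0
    rw [h0, zero_smul, hunit] at key
    have h1 : (1 : Matrix (Fin n) (Fin n) ℂ) = 0 := by
      calc (1 : Matrix (Fin n) (Fin n) ℂ)
          = (((S * conjGL S)⁻¹ : Matrix.GeneralLinearGroup (Fin n) ℂ) :
              Matrix (Fin n) (Fin n) ℂ) *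
            ((S * conjGL S : Matrix.GeneralLinearGroup (Fin n) ℂ) :
              Matrix (Fin n) (Fin n) ℂ) := ((S * conjGL S).inv_mul).symm
        _ = 0 := by rw [key, mul_zero]
    exact one_ne_zero h1
  -- c is real
  have hSA : Sm * conjMat A2m = A2m * Sm := by
    have h := hS asq
    rw [hksq] at h
    exact h
  have hcreal : (starRingEnd ℂ) c = c := by
    have h1 : conjMat Sm * Sm = (starRingEnd ℂ c) • conjMat A2m := by
      have := congrArg conjMat key
      rw [conjMat_mul, conjMat_conjMat', conjMat_smul'] at this
      exact this
    have h2 : Sm * conjMat Sm * Sm = (starRingEnd ℂ c) • (A2m * Sm) := by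
      rw [mul_assoc, h1, mul_smul_comm, hSA]
    have h3 : Sm * conjMat Sm * Sm = c • (A2m * Sm) := by
      rw [key, smul_mul_assoc]
    have h4 : ((starRingEnd ℂ c) - c) • (A2m * Sm) = 0 := by
      rw [sub_smul, ← h2, ← h3, sub_self]
    have h5 : A2m * Sm ≠ 0 := by
      intro h0
      have : (1 : Matrix (Fin n) (Fin n) ℂ) = 0 := by
        calc (1 : Matrix (Fin n) (Fin n) ℂ)
            = (((A2 * S)⁻¹ : Matrix.GeneralLinearGroup (Fin n) ℂ) :
                Matrix (Fin n) (Fin n) ℂ) *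
              ((A2 * S : Matrix.GeneralLinearGroup (Fin n) ℂ) :
                Matrix (Fin n) (Fin n) ℂ) := ((A2 * S).inv_mul).symm
          _ = 0 := by rw [Units.val_mul, h0, mul_zero]
      exact one_ne_zero this
    rcases smul_eq_zero.mp h4 with h | h
    · exact sub_eq_zero.mp h
    · exact absurd h h5
  set r : ℝ := c.re with hrdef
  have hcr : c = (r : ℂ) := by
    apply Complex.ext
    · simp [hrdef]
    · have := congrArg Complex.im hcreal
      simp at this
      simp [Complex.ofReal_im]
      linarith
  have hr0 : r ≠ 0 := by
    intro h0
    apply hc0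
    rw [hcr, h0, Complex.ofReal_zero]
  -- construct T
  set z : ℝ := (Real.sqrt |r|)⁻¹ with hzdef
  have hsq : Real.sqrt |r| ≠ 0 := by
    have : 0 < Real.sqrt |r| := Real.sqrt_pos.mpr (abs_pos.mpr hr0)
    exact ne_of_gt this
  have hz0 : (z : ℂ) ≠ 0 := by
    simp [hzdef, hsq]
  refine ⟨⟨(z : ℂ) • Sm, (z : ℂ)⁻¹ • ((S⁻¹ : Matrix.GeneralLinearGroup (Fin n) ℂ) :
      Matrix (Fin n) (Fin n) ℂ), ?_, ?_⟩, ?_, ?_⟩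
  · rw [smul_mul_smul_comm, mul_inv_cancel₀ hz0, one_smul]
    exact S.mul_inv
  · rw [smul_mul_smul_comm, inv_mul_cancel₀ hz0, one_smul]
    exact S.inv_mul
  · intro g
    show ((z : ℂ) • Sm) * conjMat (ρ (kerConj φ a g) : Matrix (Fin n) (Fin n) ℂ) =
      (ρ g : Matrix (Fin n) (Fin n) ℂ) * ((z : ℂ) • Sm)
    rw [smul_mul_assoc, hS g, mul_smul_comm]
  · show ((z : ℂ) • Sm) * conjMat ((z : ℂ) • Sm) = A2m ∨
      ((z : ℂ) • Sm) * conjMat ((z : ℂ) • Sm) = -A2m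
    have hzc : (starRingEnd ℂ) (z : ℂ) = (z : ℂ) := Complex.conj_ofReal z
    have hzz : (z : ℂ) * (z : ℂ) = ((|r|⁻¹ : ℝ) : ℂ) := by
      rw [hzdef]
      push_cast
      rw [← mul_inv]
      congr 1
      exact_mod_cast Real.mul_self_sqrt (abs_nonneg r)
    have hTT : ((z : ℂ) • Sm) * conjMat ((z : ℂ) • Sm) =
        (((|r|⁻¹ * r : ℝ) : ℂ)) • A2m := by
      rw [conjMat_smul', hzc, smul_mul_assoc, mul_smul_comm, smul_smul, key, hcr, smul_smul, hzz]
      push_cast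
      ring_nf
    rcases lt_or_gt_of_ne hr0 with hneg | hpos
    · right
      rw [hTT]
      have : |r|⁻¹ * r = -1 := by
        rw [abs_of_neg hneg]
        field_simp
      rw [this]
      push_cast
      simp
    · left
      rw [hTT]
      have : |r|⁻¹ * r = 1 := by
        rw [abs_of_pos hpos]
        field_simp
      rw [this]
      simp
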